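/- If G is a complete multipartite graph on n vertices, then π(G) = n − α(G) + 1, where α(G) is the size of a largest partite set. -/

import Mathlib

/-- A list is a repetition if it is of the form `w ++ w` for a nonempty `w`. -/
def IsRepetition {α : Type*} (l : List α) : Prop := ∃ w : List α, w ≠ [] ∧ l = w ++ w

/-- A list is non-repetitive if no block of consecutive elements is a repetition. -/
def NonRepetitive {α : Type*} (l : List α) : Prop :=
  ∀ t : List α, t <:+: l → ¬ IsRepetition t

/-- A vertex colouring is non-repetitive if the colour sequence of every path
is not a repetition. -/
def NonRepColoring {V β : Type*} (G : SimpleGraph V) (φ : V → β) : Prop :=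
  ∀ ⦃u v : V⦄ (p : G.Walk u v), p.IsPath → ¬ IsRepetition (p.support.map φ)

/-- The Thue chromatic number: minimum number of colours of a non-repetitive colouring. -/
noncomputable def thueNumber {V : Type*} [Fintype V] (G : SimpleGraph V) : ℕ :=
  sInf {k | ∃ φ : V → Fin k, NonRepColoring G φ}

/-- The Thue choice number: least `k` such that from any lists of size at least `k`
one can choose a non-repetitive colouring. -/
noncomputable def thueChoiceNumber {V : Type*} [Fintype V] (G : SimpleGraph V) : ℕ :=
  sInf {k | ∀ L : V → Finset ℕ, (∀ v, k ≤ (L v).card) →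
    ∃ φ : V → ℕ, (∀ v, φ v ∈ L v) ∧ NonRepColoring G φ}

/-- The independence number of a graph. -/
noncomputable def indepNum {V : Type*} [Fintype V] (G : SimpleGraph V) : ℕ :=
  sSup {n | ∃ s : Finset V, (∀ a ∈ s, ∀ b ∈ s, ¬ G.Adj a b) ∧ s.card = n}

/-- The lexicographic product of two simple graphs. -/
def lexProd {V W : Type*} (G : SimpleGraph V) (H : SimpleGraph W) : SimpleGraph (V × W) where
  Adj x y := G.Adj x.1 y.1 ∨ (x.1 = y.1 ∧ H.Adj x.2 y.2)
  symm := by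
    constructor
    rintro x y (h | ⟨h1, h2⟩)
    · exact Or.inl h.symm
    · exact Or.inr ⟨h1.symm, h2.symm⟩
  loopless := by
    constructor
    rintro x (h | ⟨h1, h2⟩)
    · exact G.loopless.irrefl _ h
    · exact H.loopless.irrefl _ h2

/-!
In a repetitive path every vertex has a distinct twin of the same colour, half a period away.
Hence colouring a maximum independent set `S` with one colour and all other vertices with
distinct colours is non-repetitive, giving `π(G) ≤ n - α(G) + 1` for every graph. Conversely,
in a complete multipartite graph two distinct vertices of the same colour lie in a common part,
and two such pairs `x, y` and `u, v` lie in the same part, since otherwise the path `x u y v` is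
coloured `abab`. So all repeated colours live in one part `P`, and the colouring is injective
on the complement of `P` together with one vertex of `P`.
-/

open Finset
open SimpleGraph (completeMultipartiteGraph Walk isNIndepSet_iff isIndepSet_iff)

section

variable {α β V : Type*}

theorem IsRepetition.of_map_injective {f : α → β} (hf : Function.Injective f) {l : List α}
    (h : IsRepetition (l.map f)) : IsRepetition l := by
  obtain ⟨w, hw, hl⟩ := h
  obtain ⟨a, b, rfl, ha, hb⟩ := List.map_eq_append_iff.mp hl
  obtain rfl : a = b := List.map_injective_iff.mpr hf (ha.trans hb.symm)
  exact ⟨a, by rintro rfl; exact hw ha.symm, rfl⟩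

theorem List.exists_mem_ne_map_eq_of_map_eq {f : α → β} {a b : List α} (hab : a.map f = b.map f)
    (hdisj : ∀ x ∈ a, ∀ y ∈ b, x ≠ y) {x : α} (hx : x ∈ a) : ∃ y ∈ b, y ≠ x ∧ f y = f x := by
  obtain ⟨i, hi, rfl⟩ := List.getElem_of_mem hx
  have hlen : a.length = b.length := by simpa using congrArg List.length hab
  refine ⟨b[i], List.getElem_mem _, (hdisj _ hx _ (List.getElem_mem _)).symm, ?_⟩
  simpa [List.getElem?_eq_getElem, hi, ← hlen] using (congrArg (·[i]?) hab).symm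

theorem exists_mem_ne_map_eq_of_isRepetition_map {f : α → β} {l : List α} (hl : l.Nodup)
    (hrep : IsRepetition (l.map f)) {x : α} (hx : x ∈ l) : ∃ y ∈ l, y ≠ x ∧ f y = f x := by
  obtain ⟨w, -, hw⟩ := hrep
  obtain ⟨a, b, rfl, ha, hb⟩ := List.map_eq_append_iff.mp hw
  have hdisj := (List.nodup_append.mp hl).2.2
  rcases List.mem_append.mp hx with hx | hx
  · obtain ⟨y, hy, hyx, hfy⟩ :=
      List.exists_mem_ne_map_eq_of_map_eq (ha.trans hb.symm) hdisj hx
    exact ⟨y, List.mem_append_right _ hy, hyx, hfy⟩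
  · obtain ⟨y, hy, hyx, hfy⟩ := List.exists_mem_ne_map_eq_of_map_eq (hb.trans ha.symm)
      (fun x hx y hy => (hdisj y hy x hx).symm) hx
    exact ⟨y, List.mem_append_left _ hy, hyx, hfy⟩

namespace NonRepColoring

variable {G : SimpleGraph V} {φ : V → β}

theorem of_forall_map_eq_mem {S : Set V} (hS : G.IsIndepSet S)
    (h : ∀ x y, x ≠ y → φ x = φ y → x ∈ S) : NonRepColoring G φ := by
  intro u v p hp hrep
  have twin := fun x (hx : x ∈ p.support) =>
    exists_mem_ne_map_eq_of_isRepetition_map hp.support_nodup hrep hx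
  cases p with
  | nil =>
    obtain ⟨y, hy, hyu, -⟩ := twin u (by simp)
    exact hyu (by simpa using hy)
  | cons hadj q =>
    have hmem : ∀ x ∈ (Walk.cons hadj q).support, x ∈ S := fun x hx =>
      let ⟨y, _, hyx, hfy⟩ := twin x hx
      h x y hyx.symm hfy.symm
    exact hS (hmem _ (by simp)) (hmem _ (by simp)) hadj.ne hadj

theorem of_injective (hφ : Function.Injective φ) : NonRepColoring G φ :=
  of_forall_map_eq_mem (S := ∅) (Set.pairwise_empty _) fun _ _ hxy h => (hxy (hφ h)).elim

theorem comp_injective (hφ : NonRepColoring G φ) {f : β → α} (hf : Function.Injective f) :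
    NonRepColoring G (f ∘ φ) := fun _ _ p hp hrep =>
  hφ p hp (.of_map_injective hf (by rwa [List.map_map]))

theorem ne_of_adj (hφ : NonRepColoring G φ) {u v : V} (h : G.Adj u v) : φ u ≠ φ v := by
  intro huv
  exact hφ (.cons h .nil) (by simp [h.ne]) ⟨[φ u], by simp, by simp [huv]⟩

theorem not_map_eq_of_path {a b c d : V} (hφ : NonRepColoring G φ) (hab : G.Adj a b)
    (hbc : G.Adj b c) (hcd : G.Adj c d) (hac : a ≠ c) (hbd : b ≠ d) (had : a ≠ d)
    (hφac : φ a = φ c) (hφbd : φ b = φ d) : False :=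
  hφ (.cons hab (.cons hbc (.cons hcd .nil)))
    (by simp [hab.ne, hbc.ne, hcd.ne, hac, hbd, had])
    ⟨[φ a, φ b], by simp, by simp [hφac, hφbd]⟩

end NonRepColoring

theorem indepNum_eq_simpleGraph_indepNum [Fintype V] (G : SimpleGraph V) :
    indepNum G = G.indepNum := by
  unfold indepNum SimpleGraph.indepNum
  congr 1
  ext n
  refine exists_congr fun s => ?_
  rw [isNIndepSet_iff, isIndepSet_iff]
  exact ⟨fun ⟨h, hs⟩ => ⟨fun a ha b hb _ => h a ha b hb, hs⟩,
    fun ⟨h, hs⟩ => ⟨fun a ha b hb hab => h ha hb hab.ne hab, hs⟩⟩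

section Thue

variable [Fintype V] (G : SimpleGraph V)

theorem thueNumber_le_card [Fintype β] {φ : V → β} (hφ : NonRepColoring G φ) :
    thueNumber G ≤ Fintype.card β :=
  Nat.sInf_le ⟨_, hφ.comp_injective (Fintype.equivFin β).injective⟩

theorem exists_nonRepColoring_fin_thueNumber :
    ∃ φ : V → Fin (thueNumber G), NonRepColoring G φ :=
  Nat.sInf_mem (s := {k | ∃ φ : V → Fin k, NonRepColoring G φ})
    ⟨_, Fintype.equivFin V, .of_injective (Fintype.equivFin V).injective⟩

theorem thueNumber_le_card_sub_card_add_one {S : Finset V} (hS : G.IsIndepSet S) :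
    thueNumber G ≤ Fintype.card V - #S + 1 := by
  classical
  let φ : V → Option (Sᶜ : Finset V) := fun x => if hx : x ∈ S then none else some ⟨x, by simpa⟩
  have hφ : NonRepColoring G φ := .of_forall_map_eq_mem hS fun x y hxy h => by
    by_contra hx
    by_cases hy : y ∈ S <;> simp_all [φ]
  calc thueNumber G ≤ Fintype.card (Option (Sᶜ : Finset V)) := thueNumber_le_card G hφ
    _ = Fintype.card V - #S + 1 := by simp

theorem thueNumber_le_card_sub_indepNum_add_one :
    thueNumber G ≤ Fintype.card V - indepNum G + 1 := by
  obtain ⟨S, hS⟩ := G.exists_isNIndepSet_indepNum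
  rw [indepNum_eq_simpleGraph_indepNum, ← hS.card_eq]
  exact thueNumber_le_card_sub_card_add_one G hS.isIndepSet

end Thue

namespace NonRepColoring

variable {ι : Type*} {V : ι → Type*} {φ : (Σ i, V i) → β}
  (hφ : NonRepColoring (completeMultipartiteGraph V) φ)
include hφ

theorem fst_eq_of_map_eq {x y : Σ i, V i} (h : φ x = φ y) : x.1 = y.1 :=
  not_not.mp fun hne => hφ.ne_of_adj (by simpa using hne) h

theorem fst_eq_of_map_eq_of_map_eq {x y u v : Σ i, V i} (hxy : x ≠ y) (hx : φ x = φ y)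
    (huv : u ≠ v) (hu : φ u = φ v) : x.1 = u.1 := by
  by_contra hne
  have hyx := (hφ.fst_eq_of_map_eq hx).symm
  have hvu := (hφ.fst_eq_of_map_eq hu).symm
  refine hφ.not_map_eq_of_path (a := x) (b := u) (c := y) (d := v) ?_ ?_ ?_ hxy huv ?_ hx hu
  all_goals simp only [SimpleGraph.comap_adj, SimpleGraph.top_adj, ne_eq]
  all_goals grind

theorem exists_forall_map_eq_fst_eq [Nonempty (Σ i, V i)] :
    ∃ u : Σ i, V i, ∀ x y, x ≠ y → φ x = φ y → x.1 = u.1 := by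
  by_cases hinj : Function.Injective φ
  · exact ⟨Classical.arbitrary _, fun x y hxy h => (hxy (hinj h)).elim⟩
  · obtain ⟨u, v, h, huv⟩ := Function.not_injective_iff.mp hinj
    exact ⟨u, fun x y hxy hx => hφ.fst_eq_of_map_eq_of_map_eq hxy hx huv h⟩

theorem card_sub_indepNum_add_one_le [Fintype ι] [∀ i, Fintype (V i)] [Nonempty (Σ i, V i)]
    [Fintype β] : Fintype.card (Σ i, V i) - indepNum (completeMultipartiteGraph V) + 1 ≤
      Fintype.card β := by
  classical
  obtain ⟨u, hu⟩ := hφ.exists_forall_map_eq_fst_eq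
  set P : Finset (Σ i, V i) := univ.filter fun x => x.1 = u.1
  have hP : #P ≤ indepNum (completeMultipartiteGraph V) := by
    rw [indepNum_eq_simpleGraph_indepNum]
    exact SimpleGraph.IsIndepSet.card_le_indepNum fun x hx y hy _ => by simp_all [P]
  have hinj : Set.InjOn φ ↑(insert u Pᶜ) := by
    intro x hx y hy h
    by_contra hxy
    have hx₁ := hu x y hxy h
    have hy₁ := hu y x (Ne.symm hxy) h.symm
    simp_all [P]
  calc Fintype.card (Σ i, V i) - indepNum (completeMultipartiteGraph V) + 1
      ≤ #(insert u Pᶜ) := by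
        rw [card_insert_of_notMem (by simp [P]), card_compl]
        omega
    _ ≤ Fintype.card β := by
        simpa using card_le_card_of_injOn φ (t := univ) (by simp) hinj

end NonRepColoring

end

/-- For a complete multipartite graph on `n` vertices, `π(G) = n - α(G) + 1`. -/
theorem thueNumber_completeMultipartite {ι : Type*} [Fintype ι] (V : ι → Type*)
    [∀ i, Fintype (V i)] [Nonempty (Σ i, V i)] :
    thueNumber (SimpleGraph.completeMultipartiteGraph V) =
      Fintype.card (Σ i, V i) - indepNum (SimpleGraph.completeMultipartiteGraph V) + 1 := by
  obtain ⟨φ, hφ⟩ := exists_nonRepColoring_fin_thueNumber (SimpleGraph.completeMultipartiteGraph V)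
  refine le_antisymm (thueNumber_le_card_sub_indepNum_add_one _) ?_
  simpa using hφ.card_sub_indepNum_add_one_le
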